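/- Let D be a distribution on F^n such that for every nonzero v ∈ F^n, Pr_{u∼D}[⟨v,u⟩ ≠ 0] ≥ Q. Let A be a nonzero order-q tensor in (F^n)^{⊗q} and let u_1,...,u_q be i.i.d. from D. Then Pr[A ×_1 u_1 ×_2 u_2 ⋯ ×_q u_q ≠ 0] ≥ Q^q. -/
import Mathlib

open MeasureTheory

private lemma contract_split {F : Type*} [Field F] {n q : ℕ}
    (A : (Fin (q + 1) → Fin n) → F) (w : Fin (q + 1) → Fin n → F) :
    (∑ idx : Fin (q + 1) → Fin n, A idx * ∏ j, w j (idx j))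
      = ∑ idx' : Fin q → Fin n,
          (∑ i, A (Fin.cons i idx') * w 0 i) * ∏ j, w j.succ (idx' j) := by
  rw [← (Fin.consEquiv (fun _ : Fin (q + 1) => Fin n)).sum_comp
      (fun idx => A idx * ∏ j, w j (idx j))]
  rw [Fintype.sum_prod_type, Finset.sum_comm]
  refine Finset.sum_congr rfl fun idx' _ => ?_
  rw [Finset.sum_mul]
  refine Finset.sum_congr rfl fun i _ => ?_
  rw [Fin.prod_univ_succ]
  simp [Fin.consEquiv, mul_assoc, mul_comm, mul_left_comm]

private lemma key_tensor {F : Type*} [Field F] [MeasurableSpace F] {n : ℕ}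
    (D : Measure (Fin n → F)) [IsProbabilityMeasure D] (Q : ENNReal)
    (hQ : ∀ v : Fin n → F, v ≠ 0 → Q ≤ D {u | (∑ i, v i * u i) ≠ 0}) :
    ∀ (q : ℕ) (A : (Fin q → Fin n) → F), A ≠ 0 →
      Q ^ q ≤ Measure.pi (fun _ : Fin q => D)
        {U : Fin q → Fin n → F |
          (∑ idx : Fin q → Fin n, A idx * ∏ j, U j (idx j)) ≠ 0} := by
  intro q
  induction q with
  | zero =>
    intro A hA
    have h0 : A default ≠ 0 := fun h =>
      hA (funext fun x => by rw [Subsingleton.elim x default]; exact h)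
    have huniv : {U : Fin 0 → Fin n → F |
        (∑ idx : Fin 0 → Fin n, A idx * ∏ j, U j (idx j)) ≠ 0} = Set.univ := by
      ext U
      simp [Finset.univ_unique, h0]
    rw [huniv]
    simp
  | succ q ih =>
    intro A hA
    classical
    obtain ⟨idx₀, hidx₀⟩ : ∃ idx, A idx ≠ 0 := by
      by_contra h; push_neg at h; exact hA (funext h)
    set v : Fin n → F := fun i => A (Fin.cons i (Fin.tail idx₀)) with hv
    have hv0 : v ≠ 0 := by
      intro h
      apply hidx₀
      have := congrFun h (idx₀ 0)
      rw [hv] at this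
      simpa [Fin.cons_self_tail] using this
    set ν : Measure (Fin q → Fin n → F) := Measure.pi fun _ => D with hν
    set μ : Measure (Fin (q + 1) → Fin n → F) := Measure.pi fun _ => D with hμ
    set g : (Fin n → F) × (Fin q → Fin n → F) → F := fun p =>
      ∑ idx' : Fin q → Fin n,
        (∑ i, A (Fin.cons i idx') * p.1 i) * ∏ j, p.2 j (idx' j) with hg
    set S : Set ((Fin n → F) × (Fin q → Fin n → F)) := {p | g p ≠ 0} with hS
    set e := MeasurableEquiv.piFinSuccAbove (fun _ : Fin (q + 1) => (Fin n → F)) 0 with he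
    have hmap : μ.map e = D.prod ν :=
      (measurePreserving_piFinSuccAbove (fun _ : Fin (q + 1) => D) 0).map_eq
    have hsets : e ⁻¹' S = {w : Fin (q + 1) → Fin n → F |
        (∑ idx : Fin (q + 1) → Fin n, A idx * ∏ j, w j (idx j)) ≠ 0} := by
      ext w
      have h1 : (e w).1 = w 0 := rfl
      have h2 : ∀ j : Fin q, (e w).2 j = w j.succ := fun j =>
        congrArg w (Fin.zero_succAbove j)
      simp only [Set.mem_preimage, hS, Set.mem_setOf_eq, hg]
      rw [contract_split A w]
      constructor <;> intro hne <;> intro hc <;> apply hne <;>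
        [skip; skip] <;> rw [← hc] <;> refine Finset.sum_congr rfl fun idx' _ => ?_ <;>
        rw [h1] <;> exact congrArg _ (Finset.prod_congr rfl fun j _ => by rw [h2])
    have hμT : (D.prod ν) S = μ {w : Fin (q + 1) → Fin n → F |
        (∑ idx : Fin (q + 1) → Fin n, A idx * ∏ j, w j (idx j)) ≠ 0} := by
      rw [← hmap, MeasurableEquiv.map_apply, hsets]
    rw [← hμT]
    set S' := toMeasurable (D.prod ν) S with hS'
    have hS'm : MeasurableSet S' := measurableSet_toMeasurable _ _
    have hSS' : S ⊆ S' := subset_toMeasurable _ _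
    have hval : (D.prod ν) S = (D.prod ν) S' := (measure_toMeasurable S).symm
    rw [hval, Measure.prod_apply hS'm]
    have hmeas : Measurable fun u => ν (Prod.mk u ⁻¹' S') :=
      measurable_measure_prodMk_left hS'm
    set M : Set (Fin n → F) := {u | Q ^ q ≤ ν (Prod.mk u ⁻¹' S')} with hM
    have hMm : MeasurableSet M := measurableSet_le measurable_const hmeas
    have hsub : {u : Fin n → F | (∑ i, v i * u i) ≠ 0} ⊆ M := by
      intro u hu
      have hB : (fun idx' : Fin q → Fin n => ∑ i, A (Fin.cons i idx') * u i) ≠ 0 := by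
        intro h
        apply hu
        exact congrFun h (Fin.tail idx₀)
      have hIH := ih (fun idx' : Fin q → Fin n => ∑ i, A (Fin.cons i idx') * u i) hB
      have hpre : {U : Fin q → Fin n → F |
          (∑ idx' : Fin q → Fin n,
            (∑ i, A (Fin.cons i idx') * u i) * ∏ j, U j (idx' j)) ≠ 0}
          = Prod.mk u ⁻¹' S := rfl
      calc Q ^ q ≤ ν (Prod.mk u ⁻¹' S) := by rw [← hpre]; exact hIH
        _ ≤ ν (Prod.mk u ⁻¹' S') := measure_mono (Set.preimage_mono hSS')
    calc Q ^ (q + 1) = Q ^ q * Q := pow_succ Q q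
      _ ≤ Q ^ q * D M := mul_le_mul_right (le_trans (hQ v hv0) (measure_mono hsub)) _
      _ = ∫⁻ _ in M, Q ^ q ∂D := by rw [setLIntegral_const, mul_comm]
      _ ≤ ∫⁻ u in M, ν (Prod.mk u ⁻¹' S') ∂D :=
          setLIntegral_mono hmeas fun u hu => hu
      _ ≤ ∫⁻ u, ν (Prod.mk u ⁻¹' S') ∂D := setLIntegral_le_lintegral _ _

/-- If each measurement `u ∼ D` is non-orthogonal to every fixed nonzero vector with
probability at least `Q`, then for a nonzero order-`q` tensor `A`, the full contraction
`A ×₁ u₁ ⋯ ×_q u_q = ∑_idx A(idx) ∏ⱼ uⱼ(idxⱼ)` of `A` against `q` i.i.d. draws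
is nonzero with probability at least `Q^q`. -/
theorem tensor_contraction_nonzero_prob_ge {F : Type*} [Field F] [MeasurableSpace F]
    {n q : ℕ} (D : Measure (Fin n → F)) [IsProbabilityMeasure D] (Q : ENNReal)
    (hQ : ∀ v : Fin n → F, v ≠ 0 → Q ≤ D {u | (∑ i, v i * u i) ≠ 0})
    (A : (Fin q → Fin n) → F) (hA : A ≠ 0) :
    Q ^ q ≤ Measure.pi (fun _ : Fin q => D)
        {U : Fin q → Fin n → F |
          (∑ idx : Fin q → Fin n, A idx * ∏ j, U j (idx j)) ≠ 0} := by
  exact key_tensor D Q hQ q A hA
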